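/- arXiv:1411.5061 — 7 statements merged into one kernel-verified Lean document; each statement's English description precedes it below -/
import Mathlib

section
/- Let a, b, c be positive reals with a ≠ b + c, b ≠ a + c, c ≠ a + b, and suppose b ≠ c. Define a' = |b² − c²|/a, b' = b, c' = c. Then (a', b', c') also satisfies one of the strict anti-triangle inequalities (a' > b' + c', or b' > a' + c', or c' > a' + b') if and only if (a, b, c) does. -/
/-! For `c < b` the anti-triangle condition on `(a, b, c)` reduces to `b + c < a ∨ a < b - c`,
since `a + b < c` is impossible. The switch sends `a` to `a' = (b - c)(b + c) / a`, and
`a' < b - c ↔ b + c < a` while `b + c < a' ↔ a < b - c`: the two surviving alternatives are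
exchanged. The case `b < c` follows by symmetry in `b` and `c`. -/

def IsAntiTriangle (a b c : ℝ) : Prop := b + c < a ∨ a + c < b ∨ a + b < c

lemma isAntiTriangle_comm_right {a b c : ℝ} : IsAntiTriangle a b c ↔ IsAntiTriangle a c b := by
  unfold IsAntiTriangle
  rw [add_comm c b, add_comm a b, add_comm a c]
  tauto

lemma isAntiTriangle_iff_of_nonneg_of_lt {a b c : ℝ} (ha : 0 ≤ a) (hcb : c < b) :
    IsAntiTriangle a b c ↔ b + c < a ∨ a < b - c := by
  unfold IsAntiTriangle
  constructor
  · rintro (h | h | h)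
    · exact Or.inl h
    · exact Or.inr (by linarith)
    · linarith
  · rintro (h | h)
    · exact Or.inl h
    · exact Or.inr (Or.inl (by linarith))

lemma mul_div_lt_left_iff {a x y : ℝ} (ha : 0 < a) (hx : 0 < x) : x * y / a < x ↔ y < a := by
  rw [div_lt_iff₀ ha, mul_lt_mul_iff_right₀ hx]

lemma lt_mul_div_right_iff {a x y : ℝ} (ha : 0 < a) (hy : 0 < y) : y < x * y / a ↔ a < x := by
  rw [lt_div_iff₀ ha, mul_comm y a, mul_lt_mul_iff_left₀ hy]

lemma isAntiTriangle_switch_iff_of_lt {a b c : ℝ} (ha : 0 < a) (hbc : 0 < b + c) (hcb : c < b) :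
    IsAntiTriangle (|b ^ 2 - c ^ 2| / a) b c ↔ IsAntiTriangle a b c := by
  have hd : 0 < b - c := sub_pos.2 hcb
  have habs : |b ^ 2 - c ^ 2| = (b - c) * (b + c) := by
    rw [abs_of_pos (by nlinarith)]
    ring
  rw [habs, isAntiTriangle_iff_of_nonneg_of_lt (by positivity) hcb,
    isAntiTriangle_iff_of_nonneg_of_lt ha.le hcb, lt_mul_div_right_iff ha hbc,
    mul_div_lt_left_iff ha hd, or_comm]

theorem stmt1_general (a b c : ℝ) (ha : 0 < a) (hb : 0 < b) (hc : 0 < c) (hbc : b ≠ c) :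
    (b + c < |b ^ 2 - c ^ 2| / a ∨ |b ^ 2 - c ^ 2| / a + c < b ∨
      |b ^ 2 - c ^ 2| / a + b < c) ↔
    (b + c < a ∨ a + c < b ∨ a + b < c) := by
  change IsAntiTriangle (|b ^ 2 - c ^ 2| / a) b c ↔ IsAntiTriangle a b c
  rcases hbc.lt_or_gt with hlt | hlt
  · rw [isAntiTriangle_comm_right, isAntiTriangle_comm_right (a := a), abs_sub_comm]
    exact isAntiTriangle_switch_iff_of_lt ha (add_pos hc hb) hlt
  · exact isAntiTriangle_switch_iff_of_lt ha (add_pos hb hc) hlt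

/-- Lemma 5.4: the strict anti-triangle inequalities are preserved by the
simultaneous diagonal switch `(a,b,c) ↦ (|b²−c²|/a, b, c)`. -/
theorem stmt1 (a b c : ℝ) (ha : 0 < a) (hb : 0 < b) (hc : 0 < c)
    (h1 : a ≠ b + c) (h2 : b ≠ a + c) (h3 : c ≠ a + b) (hbc : b ≠ c) :
    (b + c < |b ^ 2 - c ^ 2| / a ∨ |b ^ 2 - c ^ 2| / a + c < b ∨
      |b ^ 2 - c ^ 2| / a + b < c) ↔
    (b + c < a ∨ a + c < b ∨ a + b < c) :=
  stmt1_general a b c ha hb hc hbc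
end

section
/- Let a, b, c be positive reals. Then |a² + b² + c² − 2ab − 2ac|/(bc) ≤ 2 if and only if √a ≤ √b + √c, √b ≤ √a + √c, and √c ≤ √a + √b. -/
/-- The lower bound is automatic: `a² + b² + c² − 2ab − 2ac + 2bc = (b + c − a)²`. -/
lemma abs_le_two_mul_iff_nonneg (a b c : ℝ) :
    |a ^ 2 + b ^ 2 + c ^ 2 - 2 * a * b - 2 * a * c| ≤ 2 * (b * c) ↔
      0 ≤ 2 * a * b + 2 * b * c + 2 * c * a - a ^ 2 - b ^ 2 - c ^ 2 := by
  rw [abs_le]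
  constructor
  · rintro ⟨-, h⟩
    linarith
  · intro h
    constructor <;> nlinarith [sq_nonneg (b + c - a)]

/-- Heron: the left side is `16 · area²` of a triangle with sides `x`, `y`, `z`. -/
lemma heron_factorization (x y z : ℝ) :
    2 * x ^ 2 * y ^ 2 + 2 * y ^ 2 * z ^ 2 + 2 * z ^ 2 * x ^ 2 - (x ^ 2) ^ 2 - (y ^ 2) ^ 2
        - (z ^ 2) ^ 2 = (x + y + z) * (-x + y + z) * (x - y + z) * (x + y - z) := by
  ring

lemma heron_product_neg_of_add_lt {x y z : ℝ} (hy : 0 ≤ y) (hz : 0 ≤ z) (h : y + z < x) :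
    (x + y + z) * (-x + y + z) * (x - y + z) * (x + y - z) < 0 := by
  have hpos : 0 < (x + y + z) * (x - y + z) * (x + y - z) :=
    mul_pos (mul_pos (by linarith) (by linarith)) (by linarith)
  calc (x + y + z) * (-x + y + z) * (x - y + z) * (x + y - z)
      = (x + y + z) * (x - y + z) * (x + y - z) * (-x + y + z) := by ring
    _ < 0 := mul_neg_of_pos_of_neg hpos (by linarith)

lemma heron_product_nonneg_iff {x y z : ℝ} (hx : 0 ≤ x) (hy : 0 ≤ y) (hz : 0 ≤ z) :
    0 ≤ (x + y + z) * (-x + y + z) * (x - y + z) * (x + y - z) ↔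
      x ≤ y + z ∧ y ≤ x + z ∧ z ≤ x + y := by
  constructor
  · intro h
    refine ⟨?_, ?_, ?_⟩ <;> by_contra! hlt
    · linarith [heron_product_neg_of_add_lt hy hz hlt]
    · linarith [heron_product_neg_of_add_lt hx hz hlt,
        show (y + x + z) * (-y + x + z) * (y - x + z) * (y + x - z)
          = (x + y + z) * (-x + y + z) * (x - y + z) * (x + y - z) by ring]
    · linarith [heron_product_neg_of_add_lt hx hy hlt,
        show (z + x + y) * (-z + x + y) * (z - x + y) * (z + x - y)
          = (x + y + z) * (-x + y + z) * (x - y + z) * (x + y - z) by ring]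
  · rintro ⟨h₁, h₂, h₃⟩
    have : 0 ≤ -x + y + z := by linarith
    have : 0 ≤ x - y + z := by linarith
    have : 0 ≤ x + y - z := by linarith
    positivity

/-- Lemma 5.8(2), second part: `|a² + b² + c² − 2ab − 2ac|/(bc) ≤ 2` iff the square
roots of `a`, `b`, `c` satisfy the triangle inequalities. -/
theorem stmt5 (a b c : ℝ) (ha : 0 < a) (hb : 0 < b) (hc : 0 < c) :
    |a ^ 2 + b ^ 2 + c ^ 2 - 2 * a * b - 2 * a * c| / (b * c) ≤ 2 ↔
      (Real.sqrt a ≤ Real.sqrt b + Real.sqrt c ∧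
       Real.sqrt b ≤ Real.sqrt a + Real.sqrt c ∧
       Real.sqrt c ≤ Real.sqrt a + Real.sqrt b) := by
  rw [div_le_iff₀ (by positivity), abs_le_two_mul_iff_nonneg,
    ← heron_product_nonneg_iff (Real.sqrt_nonneg a) (Real.sqrt_nonneg b) (Real.sqrt_nonneg c),
    ← heron_factorization, Real.sq_sqrt ha.le, Real.sq_sqrt hb.le, Real.sq_sqrt hc.le]
end

section
/- Let a, b, c be positive reals with a + b + c = 1 and √a > √b + √c. Define (a', b', c') = (b + c, ab/(b+c), ac/(b+c)), so that a' + b' + c' = (b+c) + a = 1. Assume also b > c. Then √b' − √a' − √c' < √a − √b − √c, and moreover the difference (√a − √b − √c) − (√b' − √a' − √c') > 2c. -/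
/-- Case 1 of the Trace Reduction Algorithm (proof of Lemma 5.10): with
`a + b + c = 1`, `√a > √b + √c` and `b > c`, after the normalized switch
`(a,b,c) ↦ (b+c, ab/(b+c), ac/(b+c))` the deficiency strictly decreases,
with gap greater than `2c`. -/
theorem stmt7 (a b c : ℝ) (ha : 0 < a) (hb : 0 < b) (hc : 0 < c)
    (hsum : a + b + c = 1)
    (h : Real.sqrt b + Real.sqrt c < Real.sqrt a) (hbc : c < b) :
    Real.sqrt (a * b / (b + c)) - Real.sqrt (b + c) - Real.sqrt (a * c / (b + c)) <
      Real.sqrt a - Real.sqrt b - Real.sqrt c ∧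
    2 * c <
      (Real.sqrt a - Real.sqrt b - Real.sqrt c) -
        (Real.sqrt (a * b / (b + c)) - Real.sqrt (b + c) -
          Real.sqrt (a * c / (b + c))) := by
  set u := Real.sqrt a with hu
  set v := Real.sqrt b with hv
  set w := Real.sqrt c with hw
  set t := Real.sqrt (b + c) with ht
  have hbc0 : (0:ℝ) < b + c := by linarith
  have hu0 : 0 < u := Real.sqrt_pos.mpr ha
  have hv0 : 0 < v := Real.sqrt_pos.mpr hb
  have hw0 : 0 < w := Real.sqrt_pos.mpr hc
  have ht0 : 0 < t := Real.sqrt_pos.mpr hbc0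
  have hu2 : u ^ 2 = a := Real.sq_sqrt ha.le
  have hv2 : v ^ 2 = b := Real.sq_sqrt hb.le
  have hw2 : w ^ 2 = c := Real.sq_sqrt hc.le
  have ht2 : t ^ 2 = b + c := Real.sq_sqrt hbc0.le
  have ht1 : t < 1 := by
    rw [ht, show (1:ℝ) = Real.sqrt 1 by simp]
    exact Real.sqrt_lt_sqrt hbc0.le (by linarith)
  have hab : Real.sqrt (a * b / (b + c)) = u * v / t := by
    rw [Real.sqrt_div (by positivity), Real.sqrt_mul ha.le]
  have hac : Real.sqrt (a * c / (b + c)) = u * w / t := by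
    rw [Real.sqrt_div (by positivity), Real.sqrt_mul ha.le]
  rw [hab, hac]
  have hvw : w < v := by
    rw [hv, hw]; exact Real.sqrt_lt_sqrt hc.le hbc
  have hvt : v < t := by
    nlinarith [sq_nonneg (v - t), sq_nonneg w]
  have key : 2 * c < (u - v - w) - (u * v / t - t - u * w / t) := by
    rw [← hw2, show (u - v - w) - (u * v / t - t - u * w / t) =
        ((u - v - w) * t - u * v + t ^ 2 + u * w) / t by field_simp; ring,
      lt_div_iff₀ ht0]
    nlinarith [mul_pos (sub_pos.mpr h) (sub_pos.mpr hvt),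
      mul_pos (mul_pos hw0 hw0) (sub_pos.mpr ht1),
      mul_pos (sub_pos.mpr h) (sub_pos.mpr hvw)]
  constructor
  · nlinarith
  · exact key
end

section
/- Let a, b, c be positive reals with a + b + c = 1, √b > √a + √c, and a > c. Define k = √b − √a − √c and k' = √a' − √b' − √c' where (a', b', c') is the normalization of (ab, (a−c)², bc) (i.e. divided by ab + (a−c)² + bc). Then k'/k = √((a + c − 2√(ac))/(a + c − 4ac)) < 1. -/
/-!
With `s = √a`, `t = √c`, `u = √b` one has `√(ab) - (a - c) - √(bc) = (s - t)(u - s - t)`, so the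
switch multiplies the deficiency `u - s - t` by `(s - t)/√D`, and `(s - t)² = a + c - 2√(ac)`.
On the simplex `D = a + c - 4ac`, and the ratio is `< 1` because `4ac < 2√(ac)`, i.e. `ac < 1/4`,
which follows from `a + c < 1`.
-/

open Real

lemma add_sub_two_mul_sqrt_mul_eq_sq {a c : ℝ} (ha : 0 ≤ a) (hc : 0 ≤ c) :
    a + c - 2 * √(a * c) = (√a - √c) ^ 2 := by
  rw [sqrt_mul ha, sub_sq, sq_sqrt ha, sq_sqrt hc]
  ring

lemma sqrt_mul_sub_sub_sqrt_mul {a b c : ℝ} (ha : 0 ≤ a) (hb : 0 ≤ b) (hc : 0 ≤ c) :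
    √(a * b) - (a - c) - √(b * c) = (√a - √c) * (√b - √a - √c) := by
  rw [sqrt_mul ha, sqrt_mul hb]
  linear_combination sq_sqrt ha - sq_sqrt hc

lemma switch_deficiency_div_eq {a b c D : ℝ} (ha : 0 ≤ a) (hb : 0 ≤ b) (hc : 0 ≤ c)
    (hca : c ≤ a) (hD : 0 ≤ D) (hk : √b - √a - √c ≠ 0) :
    (√(a * b / D) - √((a - c) ^ 2 / D) - √(b * c / D)) / (√b - √a - √c) =
      √((a + c - 2 * √(a * c)) / D) := by
  rw [sqrt_div' _ hD, sqrt_div' _ hD, sqrt_div' _ hD, sqrt_div' _ hD, sqrt_sq (sub_nonneg.2 hca),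
    ← sub_div, ← sub_div, sqrt_mul_sub_sub_sqrt_mul ha hb hc, add_sub_two_mul_sqrt_mul_eq_sq ha hc,
    sqrt_sq (sub_nonneg.2 (sqrt_le_sqrt hca))]
  field_simp

lemma four_mul_mul_lt_two_mul_sqrt_mul {a c : ℝ} (ha : 0 < a) (hc : 0 < c) (hac : a + c < 1) :
    4 * a * c < 2 * √(a * c) := by
  have hr : 0 < √(a * c) := sqrt_pos.2 (mul_pos ha hc)
  have hr2 : √(a * c) ^ 2 = a * c := sq_sqrt (mul_pos ha hc).le
  have hquarter : 4 * (a * c) < 1 := by nlinarith [sq_nonneg (a - c)]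
  nlinarith

/-- Case 2 of the Trace Reduction Algorithm (proof of Lemma 5.10): the ratio of the
deficiencies before and after the normalized switch
`(a,b,c) ↦ (ab, (a−c)², bc)/D` equals `√((a+c−2√(ac))/(a+c−4ac)) < 1`. -/
theorem stmt8 (a b c : ℝ) (ha : 0 < a) (hb : 0 < b) (hc : 0 < c)
    (hsum : a + b + c = 1)
    (h : Real.sqrt a + Real.sqrt c < Real.sqrt b) (hac : c < a) :
    let D := a * b + (a - c) ^ 2 + b * c
    let k := Real.sqrt b - Real.sqrt a - Real.sqrt c
    let k' := Real.sqrt (a * b / D) - Real.sqrt ((a - c) ^ 2 / D) -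
      Real.sqrt (b * c / D)
    k' / k = Real.sqrt ((a + c - 2 * Real.sqrt (a * c)) / (a + c - 4 * a * c)) ∧
      k' / k < 1 := by
  intro D k k'
  have hD : D = a + c - 4 * a * c := by
    simp only [D]
    rw [show b = 1 - a - c by linarith]
    ring
  have hgap := four_mul_mul_lt_two_mul_sqrt_mul ha hc (by linarith)
  have hD0 : 0 < a + c - 4 * a * c := by
    linarith [add_sub_two_mul_sqrt_mul_eq_sq ha.le hc.le, sq_nonneg (√a - √c)]
  have hratio : k' / k = √((a + c - 2 * √(a * c)) / (a + c - 4 * a * c)) := by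
    rw [← hD]
    exact switch_deficiency_div_eq ha.le hb.le hc.le hac.le (hD ▸ hD0.le) (by linarith)
  refine ⟨hratio, ?_⟩
  rw [hratio, sqrt_lt' one_pos, one_pow, div_lt_one hD0]
  linarith
end

section
/- For every real k with −2 < k < 2, the set E_k = {(b,c) ∈ ℝ² : b > 0, c > 0, (b + c − 1)² = (k + 2)bc} is invariant under the maps S_y(b,c) = ((1−c)²/b, c) and S_z(b,c) = (b, (1−b)²/c) (wherever these are defined, i.e. b ≠ 0, c ≠ 0). -/
/- As a quadratic in `b`, the conic reads `b² + (2(c - 1) - (k + 2)c) b + (1 - c)² = 0`, so by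
Vieta the second root is `(1 - c)² / b`. -/
theorem conic_vieta_flip {K : Type*} [Field K] {k b c : K} (hb : b ≠ 0)
    (h : (b + c - 1) ^ 2 = (k + 2) * b * c) :
    ((1 - c) ^ 2 / b + c - 1) ^ 2 = (k + 2) * ((1 - c) ^ 2 / b) * c := by
  field_simp
  linear_combination (1 - c) ^ 2 * h

theorem stmt12_general (k b c : ℝ)
    (hb : b ≠ 0) (hc : c ≠ 0)
    (h : (b + c - 1) ^ 2 = (k + 2) * b * c) :
    ((1 - c) ^ 2 / b + c - 1) ^ 2 = (k + 2) * ((1 - c) ^ 2 / b) * c ∧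
    (b + (1 - b) ^ 2 / c - 1) ^ 2 = (k + 2) * b * ((1 - b) ^ 2 / c) := by
  have h_swap : (c + b - 1) ^ 2 = (k + 2) * c * b := by linear_combination h
  have flip_c := conic_vieta_flip hc h_swap
  exact ⟨conic_vieta_flip hb h, by linear_combination flip_c⟩

/-- Lemma 7.4 (first part): for `−2 < k < 2`, the conic `(b + c − 1)² = (k+2)bc` is
invariant under `S_y(b,c) = ((1−c)²/b, c)` and `S_z(b,c) = (b, (1−b)²/c)`
wherever these are defined. -/
theorem stmt12 (k b c : ℝ) (hk1 : -2 < k) (hk2 : k < 2)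
    (hb : b ≠ 0) (hc : c ≠ 0)
    (h : (b + c - 1) ^ 2 = (k + 2) * b * c) :
    ((1 - c) ^ 2 / b + c - 1) ^ 2 = (k + 2) * ((1 - c) ^ 2 / b) * c ∧
    (b + (1 - b) ^ 2 / c - 1) ^ 2 = (k + 2) * b * ((1 - b) ^ 2 / c) :=
  stmt12_general k b c hb hc h
end

section
/- For every real k with −2 < k < 2, the quartic curve Q_k = {(b,c) ∈ ℝ²_{>0} : (b + c)²(b + c − 1)² = (k + 2)bc} is the image of the ellipse E_k = {(b,c) : (b + c − 1)² = (k + 2)bc} under the map S_x(b, c) = (b/(b+c)², c/(b+c)²). -/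
/-!
Write `s = b + c`. The normalized switch `S(b, c) = (b / s², c / s²)` has coordinate sum `1 / s`,
so it is an involution away from `s = 0` and it preserves the open positive quadrant. Substituting
it into the quartic gives `(s - 1)² / s⁴ = (k + 2) b c / s⁴`, i.e. the ellipse equation at `(b, c)`.
Hence `S` maps the ellipse onto the quartic, with `S` itself as inverse.
-/

section NormalizedSwitch

variable {K : Type*} [Field K]

def normalizedSwitch (p : K × K) : K × K :=
  (p.1 / (p.1 + p.2) ^ 2, p.2 / (p.1 + p.2) ^ 2)

theorem normalizedSwitch_sum {p : K × K} (h : p.1 + p.2 ≠ 0) :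
    (normalizedSwitch p).1 + (normalizedSwitch p).2 = (p.1 + p.2)⁻¹ := by
  simp only [normalizedSwitch]
  field_simp

theorem normalizedSwitch_normalizedSwitch {p : K × K} (h : p.1 + p.2 ≠ 0) :
    normalizedSwitch (normalizedSwitch p) = p := by
  have hsum := normalizedSwitch_sum h
  rw [normalizedSwitch, hsum]
  simp only [normalizedSwitch]
  ext <;> field_simp

theorem quartic_normalizedSwitch_iff (k : K) {p : K × K} (h : p.1 + p.2 ≠ 0) :
    let q := normalizedSwitch p
    (q.1 + q.2) ^ 2 * (q.1 + q.2 - 1) ^ 2 = (k + 2) * q.1 * q.2 ↔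
      (p.1 + p.2 - 1) ^ 2 = (k + 2) * p.1 * p.2 := by
  intro q
  have hq : q.1 + q.2 = (p.1 + p.2)⁻¹ := normalizedSwitch_sum h
  have hlhs : (q.1 + q.2) ^ 2 * (q.1 + q.2 - 1) ^ 2 = (p.1 + p.2 - 1) ^ 2 / (p.1 + p.2) ^ 4 := by
    rw [hq]
    field_simp
    ring
  have hrhs : (k + 2) * q.1 * q.2 = (k + 2) * p.1 * p.2 / (p.1 + p.2) ^ 4 := by
    simp only [q, normalizedSwitch]
    field_simp
  rw [hlhs, hrhs, div_left_inj' (pow_ne_zero 4 h)]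

end NormalizedSwitch

theorem normalizedSwitch_pos {K : Type*} [Field K] [LinearOrder K] [IsStrictOrderedRing K]
    {p : K × K} (hb : 0 < p.1) (hc : 0 < p.2) :
    0 < (normalizedSwitch p).1 ∧ 0 < (normalizedSwitch p).2 := by
  simp only [normalizedSwitch]
  constructor <;> positivity

theorem stmt13_general (k : ℝ) :
    {p : ℝ × ℝ | 0 < p.1 ∧ 0 < p.2 ∧
        (p.1 + p.2) ^ 2 * (p.1 + p.2 - 1) ^ 2 = (k + 2) * p.1 * p.2} =
      (fun p : ℝ × ℝ => (p.1 / (p.1 + p.2) ^ 2, p.2 / (p.1 + p.2) ^ 2)) ''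
        {p : ℝ × ℝ | 0 < p.1 ∧ 0 < p.2 ∧
          (p.1 + p.2 - 1) ^ 2 = (k + 2) * p.1 * p.2} := by
  change _ = normalizedSwitch '' _
  ext q
  constructor
  · rintro ⟨hb, hc, hquartic⟩
    have hq : q.1 + q.2 ≠ 0 := by positivity
    obtain ⟨hb', hc'⟩ := normalizedSwitch_pos hb hc
    rw [← normalizedSwitch_normalizedSwitch hq] at hquartic
    refine ⟨normalizedSwitch q, ⟨hb', hc', ?_⟩, normalizedSwitch_normalizedSwitch hq⟩
    have hq' : (normalizedSwitch q).1 + (normalizedSwitch q).2 ≠ 0 := by positivity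
    exact (quartic_normalizedSwitch_iff k hq').1 hquartic
  · rintro ⟨p, ⟨hb, hc, hellipse⟩, rfl⟩
    exact ⟨(normalizedSwitch_pos hb hc).1, (normalizedSwitch_pos hb hc).2,
      (quartic_normalizedSwitch_iff k (by positivity)).2 hellipse⟩

/-- Lemma 7.5 (computation): for `−2 < k < 2`, the quartic curve `Q_k` is the image
of the ellipse `E_k` under the normalized switch
`S_x(b,c) = (b/(b+c)², c/(b+c)²)`. -/
theorem stmt13 (k : ℝ) (hk1 : -2 < k) (hk2 : k < 2) :
    {p : ℝ × ℝ | 0 < p.1 ∧ 0 < p.2 ∧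
        (p.1 + p.2) ^ 2 * (p.1 + p.2 - 1) ^ 2 = (k + 2) * p.1 * p.2} =
      (fun p : ℝ × ℝ => (p.1 / (p.1 + p.2) ^ 2, p.2 / (p.1 + p.2) ^ 2)) ''
        {p : ℝ × ℝ | 0 < p.1 ∧ 0 < p.2 ∧
          (p.1 + p.2 - 1) ^ 2 = (k + 2) * p.1 * p.2} :=
  stmt13_general k
end

section
/- For every real k, the ellipse E_{X,k} = {(b,c) ∈ ℝ² : b² + c² − 1 = kbc} is invariant under the map T(b,c) = ((c² − 1)/b, (((c² − 1)/b)² − 1)/c) wherever defined (b ≠ 0, c ≠ 0). -/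
/-! Viewed as a quadratic in `b`, the equation `b² + c² − 1 = kbc` has roots with product `c² − 1`
and sum `kc`, so `b ↦ (c² − 1)/b = kc − b` swaps the two roots and preserves the conic; by the
symmetry `b ↔ c` the same holds for `c ↦ (b² − 1)/c`, and `T` is the composite of these two
Vieta involutions. -/

section VietaInvolution

variable {K : Type*} [Field K] {k b c : K}

theorem sq_sub_one_div_eq_mul_sub (hb : b ≠ 0) (h : b ^ 2 + c ^ 2 - 1 = k * b * c) :
    (c ^ 2 - 1) / b = k * c - b := by
  rw [div_eq_iff hb]
  linear_combination h

theorem conic_flip_fst (hb : b ≠ 0) (h : b ^ 2 + c ^ 2 - 1 = k * b * c) :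
    ((c ^ 2 - 1) / b) ^ 2 + c ^ 2 - 1 = k * ((c ^ 2 - 1) / b) * c := by
  rw [sq_sub_one_div_eq_mul_sub hb h]
  linear_combination h

theorem conic_flip_snd (hc : c ≠ 0) (h : b ^ 2 + c ^ 2 - 1 = k * b * c) :
    b ^ 2 + ((b ^ 2 - 1) / c) ^ 2 - 1 = k * b * ((b ^ 2 - 1) / c) := by
  have h' := conic_flip_fst (k := k) (b := c) (c := b) hc (by linear_combination h)
  linear_combination h'

end VietaInvolution

/-- Lemma 7.8: the ellipse `b² + c² − 1 = kbc` is invariant under the Dehn twist map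
`T(b,c) = ((c²−1)/b, (((c²−1)/b)² − 1)/c)` wherever defined. -/
theorem stmt14 (k b c : ℝ) (hb : b ≠ 0) (hc : c ≠ 0)
    (h : b ^ 2 + c ^ 2 - 1 = k * b * c) :
    ((c ^ 2 - 1) / b) ^ 2 + ((((c ^ 2 - 1) / b) ^ 2 - 1) / c) ^ 2 - 1 =
      k * ((c ^ 2 - 1) / b) * ((((c ^ 2 - 1) / b) ^ 2 - 1) / c) :=
  conic_flip_snd hc (conic_flip_fst hb h)
end
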